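/- arXiv:2004.02976 — 3 statements merged into one kernel-verified Lean document; each statement's English description precedes it below -/
import Mathlib

section
/- For all m, n ≥ 1 and α, σ_α(m) σ_α(n) = ∑_{d | gcd(m,n)} d^α σ_α(mn/d²). -/
open Finset ArithmeticFunction

/-- Two positive naturals with the same factorization are equal. -/
private lemma eq_of_fact_eq {x y : ℕ} (hx : x ≠ 0) (hy : y ≠ 0)
    (h : ∀ p, x.factorization p = y.factorization p) : x = y := by
  refine Nat.dvd_antisymm ?_ ?_ <;>
    rw [← Nat.factorization_le_iff_dvd (by assumption) (by assumption)] <;>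
    rw [Finsupp.le_def] <;> intro p
  · exact (h p).le
  · exact (h p).ge

private lemma fact_le_of_dvd {x y : ℕ} (hx : x ≠ 0) (hy : y ≠ 0) (h : x ∣ y) (p : ℕ) :
    x.factorization p ≤ y.factorization p :=
  Finsupp.le_def.mp ((Nat.factorization_le_iff_dvd hx hy).mpr h) p

private lemma dvd_of_fact_le {x y : ℕ} (hx : x ≠ 0) (hy : y ≠ 0)
    (h : ∀ p, x.factorization p ≤ y.factorization p) : x ∣ y := by
  rw [← Nat.factorization_le_iff_dvd hx hy, Finsupp.le_def]; exact h

/-- Hecke-type multiplication for the sum-of-divisors function: for all `m, n ≥ 1`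
and natural exponent `α`, `σ_α(m)·σ_α(n) = ∑_{d | gcd(m,n)} d^α · σ_α(m·n/d²)`. -/
theorem sigma_mul_identity (α m n : ℕ) (hm : 1 ≤ m) (hn : 1 ≤ n) :
    (ArithmeticFunction.sigma α m) * (ArithmeticFunction.sigma α n) =
      ∑ d ∈ (Nat.gcd m n).divisors, d ^ α * ArithmeticFunction.sigma α (m * n / d ^ 2) := by
  have hm0 : m ≠ 0 := by omega
  have hn0 : n ≠ 0 := by omega
  have hmn0 : m * n ≠ 0 := Nat.mul_ne_zero hm0 hn0
  simp only [sigma_apply]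
  rw [Finset.sum_mul_sum, ← Finset.sum_product']
  simp only [Finset.mul_sum]
  rw [Finset.sum_sigma']
  -- bijection between pairs (a,b), a ∣ m, b ∣ n and pairs (d, e), d ∣ gcd m n, e ∣ m*n/d^2
  refine Finset.sum_nbij'
    (i := fun x => (⟨Nat.gcd x.1 (n / x.2), x.1 * x.2 / Nat.gcd x.1 (n / x.2)⟩ : Σ _ : ℕ, ℕ))
    (j := fun y => (y.1 * (y.2 / Nat.gcd y.2 (n / y.1)), Nat.gcd y.2 (n / y.1)))
    ?_ ?_ ?_ ?_ ?_
  · -- forward membership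
    rintro ⟨a, b⟩ hx
    simp only [Finset.mem_product, Nat.mem_divisors] at hx
    obtain ⟨⟨ha, -⟩, hb, -⟩ := hx
    have ha0 : a ≠ 0 := fun h => hm0 (by simpa [h] using ha)
    have hb0 : b ≠ 0 := fun h => hn0 (by simpa [h] using hb)
    set d := Nat.gcd a (n / b) with hd
    have hda : d ∣ a := Nat.gcd_dvd_left _ _
    have hdnb : d ∣ n / b := Nat.gcd_dvd_right _ _
    have hbd : b * d ∣ n := (Nat.dvd_div_iff_mul_dvd hb).mp hdnb
    have hd0 : d ≠ 0 := Nat.gcd_ne_zero_left ha0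
    have hdm : d ∣ m := hda.trans ha
    have hdn : d ∣ n := (dvd_mul_left d b).trans hbd
    have hd2 : d ^ 2 ∣ m * n := by
      rw [pow_two]; exact Nat.mul_dvd_mul hdm hdn
    have habd : a * b * d ∣ m * n := by
      have : a * (b * d) ∣ m * n := Nat.mul_dvd_mul ha hbd
      rwa [← mul_assoc] at this
    simp only [Finset.mem_sigma, Nat.mem_divisors]
    refine ⟨⟨Nat.dvd_gcd hdm hdn, Nat.gcd_ne_zero_left hm0⟩, ?_, ?_⟩
    · rw [Nat.dvd_div_iff_mul_dvd hd2]
      have hdab : d ∣ a * b := hda.mul_right b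
      calc d ^ 2 * (a * b / d) = d * (d * (a * b / d)) := by ring
        _ = d * (a * b) := by rw [Nat.mul_div_cancel' hdab]
        _ = a * b * d := by ring
        _ ∣ m * n := habd
    · exact Nat.div_ne_zero_iff.mpr ⟨(pow_ne_zero 2 hd0), Nat.le_of_dvd (by omega) hd2⟩
  · -- backward membership
    rintro ⟨d, e⟩ hy
    simp only [Finset.mem_sigma, Nat.mem_divisors, Nat.dvd_gcd_iff] at hy
    obtain ⟨⟨⟨hdm, hdn⟩, -⟩, he, hq0⟩ := hy
    have hd0 : d ≠ 0 := fun h => hm0 (by simpa [h] using hdm)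
    have hq : m * n / d ^ 2 ≠ 0 := hq0
    have he0 : e ≠ 0 := fun h => hq (by simpa [h] using he)
    have hd2 : d ^ 2 ∣ m * n := by rw [pow_two]; exact Nat.mul_dvd_mul hdm hdn
    have hed2 : d ^ 2 * e ∣ m * n := (Nat.dvd_div_iff_mul_dvd hd2).mp he
    set g := Nat.gcd e (n / d) with hg
    have hge : g ∣ e := Nat.gcd_dvd_left _ _
    have hgnd : g ∣ n / d := Nat.gcd_dvd_right _ _
    have hg0 : g ≠ 0 := Nat.gcd_ne_zero_left he0
    have hnd0 : n / d ≠ 0 := Nat.div_ne_zero_iff.mpr ⟨hd0, Nat.le_of_dvd (by omega) hdn⟩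
    have heg0 : e / g ≠ 0 := Nat.div_ne_zero_iff.mpr ⟨hg0, Nat.le_of_dvd (by omega) hge⟩
    simp only [Finset.mem_product, Nat.mem_divisors]
    constructor
    · refine ⟨dvd_of_fact_le (Nat.mul_ne_zero hd0 heg0) hm0 fun p => ?_, hm0⟩
      have h1 := fact_le_of_dvd hd0 hm0 hdm p
      have h2 := fact_le_of_dvd hd0 hn0 hdn p
      have h3 := fact_le_of_dvd (Nat.mul_ne_zero (pow_ne_zero 2 hd0) he0) hmn0 hed2 p
      rw [Nat.factorization_mul hd0 heg0, Finsupp.add_apply,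
        Nat.factorization_div hge, Finsupp.tsub_apply, hg,
        Nat.factorization_gcd he0 hnd0, Finsupp.inf_apply,
        Nat.factorization_div hdn, Finsupp.tsub_apply]
      rw [Nat.factorization_mul (pow_ne_zero 2 hd0) he0, Finsupp.add_apply,
        Nat.factorization_pow, Finsupp.smul_apply,
        Nat.factorization_mul hm0 hn0, Finsupp.add_apply] at h3
      simp only [smul_eq_mul] at *
      omega
    · exact ⟨hgnd.trans (Nat.div_dvd_of_dvd hdn), hn0⟩
  · -- left inverse
    rintro ⟨a, b⟩ hx
    simp only [Finset.mem_product, Nat.mem_divisors] at hx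
    obtain ⟨⟨ha, -⟩, hb, -⟩ := hx
    have ha0 : a ≠ 0 := fun h => hm0 (by simpa [h] using ha)
    have hb0 : b ≠ 0 := fun h => hn0 (by simpa [h] using hb)
    set d := Nat.gcd a (n / b) with hd
    have hda : d ∣ a := Nat.gcd_dvd_left _ _
    have hdnb : d ∣ n / b := Nat.gcd_dvd_right _ _
    have hbd : b * d ∣ n := (Nat.dvd_div_iff_mul_dvd hb).mp hdnb
    have hd0 : d ≠ 0 := Nat.gcd_ne_zero_left ha0
    have hdn : d ∣ n := (dvd_mul_left d b).trans hbd
    have hdab : d ∣ a * b := hda.mul_right b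
    have hab0 : a * b / d ≠ 0 :=
      Nat.div_ne_zero_iff.mpr ⟨hd0, Nat.le_of_dvd (by positivity) hdab⟩
    have hnd0 : n / d ≠ 0 := Nat.div_ne_zero_iff.mpr ⟨hd0, Nat.le_of_dvd (by omega) hdn⟩
    -- key1 : gcd (a*b/d) (n/d) = b
    have key1 : Nat.gcd (a * b / d) (n / d) = b := by
      refine eq_of_fact_eq (Nat.gcd_ne_zero_left hab0) hb0 fun p => ?_
      have hA := fact_le_of_dvd ha0 hm0 ha p
      have hB := fact_le_of_dvd hb0 hn0 hb p
      rw [Nat.factorization_gcd hab0 hnd0, Finsupp.inf_apply,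
        Nat.factorization_div hdab, Finsupp.tsub_apply,
        Nat.factorization_div hdn, Finsupp.tsub_apply,
        Nat.factorization_mul ha0 hb0, Finsupp.add_apply, hd,
        Nat.factorization_gcd ha0 (Nat.div_ne_zero_iff.mpr ⟨hb0,
          Nat.le_of_dvd (by omega) hb⟩), Finsupp.inf_apply,
        Nat.factorization_div hb, Finsupp.tsub_apply]
      simp only [Nat.min_def] at *
      split_ifs at * <;> omega
    have h2 : a * b / d / b = a / d := by
      rw [mul_comm, Nat.mul_div_assoc b hda, Nat.mul_div_cancel_left _ (by omega : 0 < b)]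
    dsimp only
    rw [key1, h2, Nat.mul_div_cancel' hda]
  · -- right inverse
    rintro ⟨d, e⟩ hy
    simp only [Finset.mem_sigma, Nat.mem_divisors, Nat.dvd_gcd_iff] at hy
    obtain ⟨⟨⟨hdm, hdn⟩, -⟩, he, hq0⟩ := hy
    have hd0 : d ≠ 0 := fun h => hm0 (by simpa [h] using hdm)
    have he0 : e ≠ 0 := fun h => hq0 (by simpa [h] using he)
    have hd2 : d ^ 2 ∣ m * n := by rw [pow_two]; exact Nat.mul_dvd_mul hdm hdn
    have hed2 : d ^ 2 * e ∣ m * n := (Nat.dvd_div_iff_mul_dvd hd2).mp he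
    set g := Nat.gcd e (n / d) with hg
    have hge : g ∣ e := Nat.gcd_dvd_left _ _
    have hgnd : g ∣ n / d := Nat.gcd_dvd_right _ _
    have hg0 : g ≠ 0 := Nat.gcd_ne_zero_left he0
    have hnd0 : n / d ≠ 0 := Nat.div_ne_zero_iff.mpr ⟨hd0, Nat.le_of_dvd (by omega) hdn⟩
    have heg0 : e / g ≠ 0 := Nat.div_ne_zero_iff.mpr ⟨hg0, Nat.le_of_dvd (by omega) hge⟩
    have hgn : g ∣ n := hgnd.trans (Nat.div_dvd_of_dvd hdn)
    have hng0 : n / g ≠ 0 := Nat.div_ne_zero_iff.mpr ⟨hg0, Nat.le_of_dvd (by omega) hgn⟩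
    -- key2 : gcd (d * (e/g)) (n/g) = d
    have key2 : Nat.gcd (d * (e / g)) (n / g) = d := by
      refine eq_of_fact_eq (Nat.gcd_ne_zero_left (Nat.mul_ne_zero hd0 heg0)) hd0 fun p => ?_
      have h1 := fact_le_of_dvd hd0 hn0 hdn p
      have h3 := fact_le_of_dvd (Nat.mul_ne_zero (pow_ne_zero 2 hd0) he0) hmn0 hed2 p
      rw [Nat.factorization_mul (pow_ne_zero 2 hd0) he0, Finsupp.add_apply,
        Nat.factorization_pow, Finsupp.smul_apply,
        Nat.factorization_mul hm0 hn0, Finsupp.add_apply] at h3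
      rw [Nat.factorization_gcd (Nat.mul_ne_zero hd0 heg0) hng0, Finsupp.inf_apply,
        Nat.factorization_mul hd0 heg0, Finsupp.add_apply,
        Nat.factorization_div hge, Finsupp.tsub_apply,
        Nat.factorization_div hgn, Finsupp.tsub_apply, hg,
        Nat.factorization_gcd he0 hnd0, Finsupp.inf_apply,
        Nat.factorization_div hdn, Finsupp.tsub_apply]
      simp only [smul_eq_mul] at *
      omega
    have h2 : d * (e / g) * g / d = e := by
      rw [mul_assoc, Nat.div_mul_cancel hge, Nat.mul_div_cancel_left _ (by omega : 0 < d)]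
    dsimp only
    rw [key2, h2]
  · -- weights agree
    rintro ⟨a, b⟩ hx
    simp only [Finset.mem_product, Nat.mem_divisors] at hx
    obtain ⟨⟨ha, -⟩, hb, -⟩ := hx
    have ha0 : a ≠ 0 := fun h => hm0 (by simpa [h] using ha)
    set d := Nat.gcd a (n / b) with hd
    have hda : d ∣ a := Nat.gcd_dvd_left _ _
    have hd0 : d ≠ 0 := Nat.gcd_ne_zero_left ha0
    have hdab : d ∣ a * b := hda.mul_right b
    have : d * (a * b / d) = a * b := Nat.mul_div_cancel' hdab
    calc a ^ α * b ^ α = (a * b) ^ α := (mul_pow a b α).symm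
      _ = (d * (a * b / d)) ^ α := by rw [this]
      _ = d ^ α * (a * b / d) ^ α := mul_pow _ _ _
end

section
/- Suppose f is a multiplicative function with f(p) ≠ 1 for all primes p dividing n. Then ∑_{d|n} μ(d) ω(d) f(d) = (∏_{p|n} (1 - f(p))) · ∑_{p|n} f(p)/(f(p) - 1), where the products and sums run over the distinct prime divisors of n. -/
open Finset ArithmeticFunction Polynomial
open scoped ArithmeticFunction.omega ArithmeticFunction.Moebius

/-!
Only squarefree divisors contribute, and these are the products `∏ p ∈ S, p` over the subsets `S`
of the prime factors of `n`, each contributing `#S * ∏ p ∈ S, (-f p)`. Summing over `S` is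
differentiating `∏ p ∣ n, (1 - f p * T) = ∑ S, (-T) ^ #S * ∏ p ∈ S, f p` at `T = 1`, which gives
`∑ p ∣ n, -f p * ∏ q ≠ p, (1 - f q)`.
-/

theorem Finset.sum_powerset_card_mul_prod {ι R : Type*} [CommRing R] [DecidableEq ι]
    (s : Finset ι) (x : ι → R) :
    ∑ t ∈ s.powerset, (#t : R) * ∏ i ∈ t, x i = ∑ i ∈ s, x i * ∏ j ∈ s.erase i, (1 + x j) := by
  have h := congrArg (fun P : R[X] => (derivative P).eval 1)
    (prod_one_add (f := fun i => C (x i) * X) s)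
  simp only [derivative_prod_finset, derivative_add, derivative_one, derivative_mul, derivative_C,
    zero_mul, derivative_X, mul_one, zero_add, eval_finsetSum, eval_mul, eval_prod, eval_add,
    eval_one, eval_C, eval_X, prod_mul_distrib, ← map_prod, prod_const, map_sum, derivative_X_pow,
    map_natCast, eval_natCast, eval_pow, one_pow] at h
  simpa only [mul_comm] using h.symm

theorem Finset.prod_one_sub_mul_div_sub_one {ι K : Type*} [Field K] [DecidableEq ι]
    {s : Finset ι} {x : ι → K} {i : ι} (hi : i ∈ s) (hx : x i ≠ 1) :
    (∏ j ∈ s, (1 - x j)) * (x i / (x i - 1)) = -x i * ∏ j ∈ s.erase i, (1 - x j) := by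
  rw [← mul_prod_erase s _ hi]
  field_simp [sub_ne_zero.mpr hx]
  ring

theorem Nat.map_prod_of_coprime {ι M : Type*} [CommMonoid M] {f : ℕ → M} (hf1 : f 1 = 1)
    (hfm : ∀ a b : ℕ, Nat.Coprime a b → f (a * b) = f a * f b) (g : ι → ℕ) (s : Finset ι)
    (hs : (s : Set ι).Pairwise (Function.onFun Nat.Coprime g)) :
    f (∏ i ∈ s, g i) = ∏ i ∈ s, f (g i) := by
  classical
  induction s using Finset.induction_on with
  | empty => simpa using hf1
  | insert a s has ih =>
    rw [coe_insert, Set.pairwise_insert_of_symm] at hs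
    rw [prod_insert has, prod_insert has, hfm _ _ (Nat.Coprime.prod_right fun i hi =>
      hs.2 i hi (ne_of_mem_of_not_mem hi has).symm), ih hs.1]

theorem Nat.map_prod_primes {M : Type*} [CommMonoid M] {f : ℕ → M} (hf1 : f 1 = 1)
    (hfm : ∀ a b : ℕ, Nat.Coprime a b → f (a * b) = f a * f b) {S : Finset ℕ}
    (hS : ∀ p ∈ S, p.Prime) : f (∏ p ∈ S, p) = ∏ p ∈ S, f p :=
  Nat.map_prod_of_coprime hf1 hfm id S fun p hp q hq hpq =>
    (Nat.coprime_primes (hS p hp) (hS q hq)).mpr hpq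

theorem ArithmeticFunction.cardDistinctFactors_prod_primes {S : Finset ℕ}
    (hS : ∀ p ∈ S, p.Prime) : ω (∏ p ∈ S, p) = #S := by
  rw [cardDistinctFactors_apply, ← List.card_toFinset, ← Nat.primeFactors,
    Nat.primeFactors_prod hS]

theorem ArithmeticFunction.moebius_prod_primes {S : Finset ℕ}
    (hS : ∀ p ∈ S, p.Prime) : μ (∏ p ∈ S, p) = (-1) ^ #S := by
  rw [isMultiplicative_moebius.map_prod_of_prime S hS,
    prod_congr rfl fun p hp => moebius_apply_prime (hS p hp), prod_const]

theorem ArithmeticFunction.moebius_mul_cardDistinctFactors_mul_prod_primes {R : Type*}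
    [CommRing R] {f : ℕ → R} (hf1 : f 1 = 1)
    (hfm : ∀ a b : ℕ, Nat.Coprime a b → f (a * b) = f a * f b) {S : Finset ℕ}
    (hS : ∀ p ∈ S, p.Prime) :
    (μ (∏ p ∈ S, p) : R) * ω (∏ p ∈ S, p) * f (∏ p ∈ S, p) = #S * ∏ p ∈ S, -f p := by
  rw [moebius_prod_primes hS, cardDistinctFactors_prod_primes hS, Nat.map_prod_primes hf1 hfm hS,
    prod_neg]
  push_cast
  ring

theorem Nat.sum_divisors_filter_squarefree_eq_sum_powerset {α : Type*} [AddCommMonoid α]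
    {n : ℕ} (hn : n ≠ 0) (h : ℕ → α) :
    ∑ d ∈ n.divisors with Squarefree d, h d =
      ∑ S ∈ n.primeFactors.powerset, h (∏ p ∈ S, p) := by
  rw [Nat.sum_divisors_filter_squarefree hn, Nat.factors_eq]
  simp_rw [Finset.prod_val]
  rfl

/-- For multiplicative `f` with `f(p) ≠ 1` for all primes `p | n`:
`∑_{d|n} μ(d) ω(d) f(d) = (∏_{p|n} (1 - f(p))) · ∑_{p|n} f(p)/(f(p) - 1)`. -/
theorem sum_moebius_omega_mul (f : ℕ → ℂ) (n : ℕ) (hn : 1 ≤ n)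
    (hf1 : f 1 = 1) (hfm : ∀ a b : ℕ, Nat.Coprime a b → f (a * b) = f a * f b)
    (hfp : ∀ p : ℕ, p.Prime → p ∣ n → f p ≠ 1) :
    (∑ d ∈ n.divisors,
        (ArithmeticFunction.moebius d : ℂ) * (ArithmeticFunction.cardDistinctFactors d : ℂ) * f d) =
      (∏ p ∈ n.primeFactors, (1 - f p)) * ∑ p ∈ n.primeFactors, f p / (f p - 1) := by
  calc _ = ∑ d ∈ n.divisors with Squarefree d, (μ d : ℂ) * (ω d : ℂ) * f d := by
        refine (sum_filter_of_ne fun d _ hd => ?_).symm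
        by_contra hsq
        simp [moebius_eq_zero_of_not_squarefree hsq] at hd
    _ = ∑ S ∈ n.primeFactors.powerset, (#S : ℂ) * ∏ p ∈ S, -f p := by
        rw [Nat.sum_divisors_filter_squarefree_eq_sum_powerset (by omega)]
        exact sum_congr rfl fun S hS => moebius_mul_cardDistinctFactors_mul_prod_primes hf1 hfm
          fun p hp => Nat.prime_of_mem_primeFactors (mem_powerset.mp hS hp)
    _ = ∑ p ∈ n.primeFactors, -f p * ∏ q ∈ n.primeFactors.erase p, (1 + -f q) :=
        sum_powerset_card_mul_prod _ _
    _ = _ := by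
        rw [mul_sum]
        refine sum_congr rfl fun p hp => ?_
        rw [prod_one_sub_mul_div_sub_one hp
          (hfp p (Nat.prime_of_mem_primeFactors hp) (Nat.dvd_of_mem_primeFactors hp))]
        simp_rw [← sub_eq_add_neg]
end

section
/- For all n ≥ 1, ∑_{d|n} (μ(d) log d)/d = (φ(n)/n) · ∑_{p|n} (log p)/(1 - p), where the right-hand sum is over the distinct prime divisors of n. -/
/-!
Only the squarefree divisors `d = ∏ p ∈ t, p` with `t ⊆ n.primeFactors` contribute; for them
`μ d / d = ∏ p ∈ t, (-p⁻¹)` and `log d = ∑ p ∈ t, log p`. Summing `(∏ i ∈ t, a i) * ∑ i ∈ t, b i`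
over all subsets `t` is a product rule: it equals `∏ (1 + a i) * ∑ a i * b i / (1 + a i)`, and for
`a p = -p⁻¹` the product is Euler's `φ n / n`.
-/

open Finset ArithmeticFunction
open scoped ArithmeticFunction.Moebius

theorem Finset.sum_powerset_prod_mul_sum {ι K : Type*} [Field K] [DecidableEq ι]
    (s : Finset ι) (a b : ι → K) (ha : ∀ i ∈ s, 1 + a i ≠ 0) :
    ∑ t ∈ s.powerset, (∏ i ∈ t, a i) * ∑ i ∈ t, b i =
      (∏ i ∈ s, (1 + a i)) * ∑ i ∈ s, a i * b i / (1 + a i) := by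
  induction s using Finset.induction_on with
  | empty => simp
  | @insert j s hj ih =>
    have hj1 : 1 + a j ≠ 0 := ha j (mem_insert_self j s)
    have hinsert : ∀ t ∈ s.powerset,
        (∏ i ∈ insert j t, a i) * ∑ i ∈ insert j t, b i =
          a j * b j * ∏ i ∈ t, a i + a j * ((∏ i ∈ t, a i) * ∑ i ∈ t, b i) := by
      intro t ht
      have hjt : j ∉ t := fun h => hj (mem_powerset.mp ht h)
      rw [prod_insert hjt, sum_insert hjt]
      ring
    rw [sum_powerset_insert hj, sum_congr rfl hinsert, sum_add_distrib, ← mul_sum, ← mul_sum,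
      ← prod_one_add, ih fun i hi => ha i (mem_insert_of_mem hi), prod_insert hj, sum_insert hj]
    field_simp
    ring

theorem ArithmeticFunction.sum_divisors_moebius_mul_eq_sum_powerset {R : Type*} [CommRing R]
    {n : ℕ} (hn : n ≠ 0) (f : ℕ → R) :
    ∑ d ∈ n.divisors, (μ d : R) * f d =
      ∑ t ∈ n.primeFactors.powerset, (-1) ^ t.card * f (∏ p ∈ t, p) := by
  have hsq : ∀ d ∈ n.divisors, (μ d : R) * f d ≠ 0 → Squarefree d := fun d _ hd =>
    moebius_ne_zero_iff_squarefree.mp fun h => hd (by simp [h])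
  rw [← sum_filter_of_ne hsq, Nat.sum_divisors_filter_squarefree hn, Nat.factors_eq]
  refine sum_congr rfl fun t ht => ?_
  have ht : t ⊆ n.primeFactors := mem_powerset.mp ht
  have hmoebius : μ (∏ p ∈ t, p) = (-1) ^ t.card := by
    rw [isMultiplicative_moebius.map_prod_of_subset_primeFactors n t ht,
      prod_congr rfl fun p hp => moebius_apply_prime (Nat.prime_of_mem_primeFactors (ht hp)),
      prod_const]
  rw [prod_val, Function.id_def, hmoebius]
  push_cast
  rfl

theorem Nat.cast_totient_div_self {K : Type*} [Field K] [CharZero K] {n : ℕ} (hn : n ≠ 0) :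
    (n.totient : K) / n = ∏ p ∈ n.primeFactors, (1 - (p : K)⁻¹) := by
  have h := congrArg (Rat.cast : ℚ → K) (Nat.totient_eq_mul_prod_factors n)
  push_cast at h
  rw [h, mul_div_cancel_left₀ _ (Nat.cast_ne_zero.mpr hn)]

/-- For all `n ≥ 1`,
`∑_{d|n} μ(d) log(d)/d = (φ(n)/n) · ∑_{p|n} log(p)/(1 - p)`. -/
theorem sum_moebius_log_div (n : ℕ) (hn : 1 ≤ n) :
    (∑ d ∈ n.divisors, (ArithmeticFunction.moebius d : ℝ) * Real.log d / d) =
      ((Nat.totient n : ℝ) / n) * ∑ p ∈ n.primeFactors, Real.log p / (1 - (p : ℝ)) := by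
  have hn0 : n ≠ 0 := Nat.one_le_iff_ne_zero.mp hn
  have hprime : ∀ p ∈ n.primeFactors, (p : ℝ) ≠ 0 ∧ (p : ℝ) ≠ 1 := fun p hp =>
    have hp := Nat.prime_of_mem_primeFactors hp
    ⟨Nat.cast_ne_zero.mpr hp.ne_zero, Nat.cast_ne_one.mpr hp.ne_one⟩
  have hterm : ∀ t ∈ n.primeFactors.powerset,
      (-1) ^ t.card * (Real.log (∏ p ∈ t, p : ℕ) / (∏ p ∈ t, p : ℕ)) =
        (∏ p ∈ t, -(p : ℝ)⁻¹) * ∑ p ∈ t, Real.log p := fun t ht => by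
    push_cast
    rw [Real.log_prod fun p hp => (hprime p (mem_powerset.mp ht hp)).1, prod_neg,
      prod_inv_distrib]
    ring
  have hone_sub : ∀ p ∈ n.primeFactors, 1 + -(p : ℝ)⁻¹ ≠ 0 := fun p hp => by
    rw [← sub_eq_add_neg, sub_ne_zero, ne_comm, inv_ne_one]
    exact (hprime p hp).2
  have hfactor : ∀ p ∈ n.primeFactors,
      -(p : ℝ)⁻¹ * Real.log p / (1 + -(p : ℝ)⁻¹) = Real.log p / (1 - (p : ℝ)) := fun p hp => by
    obtain ⟨hp0, hp1⟩ := hprime p hp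
    rw [div_eq_div_iff (hone_sub p hp) (sub_ne_zero.mpr hp1.symm)]
    field_simp
    ring
  simp_rw [mul_div_assoc]
  rw [sum_divisors_moebius_mul_eq_sum_powerset hn0, sum_congr rfl hterm,
    sum_powerset_prod_mul_sum _ _ _ hone_sub, Nat.cast_totient_div_self hn0,
    sum_congr rfl hfactor]
  simp_rw [sub_eq_add_neg]
end
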